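/- Let a < b be real numbers, C ≥ 0, and let f : [a, b] → ℝ be continuous. Suppose that for every τ ∈ [a, b) there exists y ∈ (τ, b] such that |f(y) − f(τ)| ≤ C (y − τ). Then |f(b) − f(a)| ≤ C (b − a). -/

import Mathlib

/-! The set of `x ∈ [a, b]` with `‖f x - f a‖ ≤ C (x - a)` is closed and contains `a`, and by the
triangle inequality the hypothesis lets every point of it below `b` be followed by a larger one.
A closed set with these properties contains `b` (its supremum cannot lie below `b`). -/

open Set

variable {E : Type*} [SeminormedAddCommGroup E] {f : ℝ → E} {a b C : ℝ}

theorem norm_sub_le_mul_sub_trans {x y z : ℝ} (hxy : ‖f y - f x‖ ≤ C * (y - x))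
    (hyz : ‖f z - f y‖ ≤ C * (z - y)) : ‖f z - f x‖ ≤ C * (z - x) :=
  calc ‖f z - f x‖ ≤ ‖f z - f y‖ + ‖f y - f x‖ := norm_sub_le_norm_sub_add_norm_sub _ _ _
    _ ≤ C * (z - y) + C * (y - x) := add_le_add hyz hxy
    _ = C * (z - x) := by ring

theorem isClosed_setOf_norm_sub_le_inter_Icc (hf : ContinuousOn f (Icc a b)) :
    IsClosed ({x | ‖f x - f a‖ ≤ C * (x - a)} ∩ Icc a b) := by
  rw [inter_comm, ← sep_mem_eq]
  exact isClosed_Icc.isClosed_le (hf.sub continuousOn_const).norm (by fun_prop)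

theorem norm_sub_le_mul_of_forall_exists_gt (hab : a ≤ b) (hf : ContinuousOn f (Icc a b))
    (h : ∀ τ ∈ Ico a b, ∃ y ∈ Ioc τ b, ‖f y - f τ‖ ≤ C * (y - τ)) :
    ‖f b - f a‖ ≤ C * (b - a) := by
  refine (isClosed_setOf_norm_sub_le_inter_Icc hf).mem_of_ge_of_forall_exists_gt (by simp) hab ?_
  rintro x ⟨hxa, hx⟩
  obtain ⟨y, hy, hxy⟩ := h x hx
  exact ⟨y, norm_sub_le_mul_sub_trans hxa hxy, hy⟩

theorem lipschitz_bound_propagation_general (a b : ℝ) (hab : a < b) (C : ℝ)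
    (f : ℝ → ℝ) (hf : ContinuousOn f (Set.Icc a b))
    (h : ∀ τ ∈ Set.Ico a b, ∃ y ∈ Set.Ioc τ b, |f y - f τ| ≤ C * (y - τ)) :
    |f b - f a| ≤ C * (b - a) := by
  simp only [← Real.norm_eq_abs] at h ⊢
  exact norm_sub_le_mul_of_forall_exists_gt hab.le hf h

/-- **Propagation of local Lipschitz bounds** (argument of Corollary 7.3): if a continuous
`f : [a,b] → ℝ` admits, at every `τ ∈ [a,b)`, a point `y ∈ (τ,b]` with
`|f(y) - f(τ)| ≤ C(y - τ)`, then `|f(b) - f(a)| ≤ C(b - a)`. -/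
theorem lipschitz_bound_propagation (a b : ℝ) (hab : a < b) (C : ℝ) (hC : 0 ≤ C)
    (f : ℝ → ℝ) (hf : ContinuousOn f (Set.Icc a b))
    (h : ∀ τ ∈ Set.Ico a b, ∃ y ∈ Set.Ioc τ b, |f y - f τ| ≤ C * (y - τ)) :
    |f b - f a| ≤ C * (b - a) :=
  lipschitz_bound_propagation_general a b hab C f hf h
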